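/- arXiv:2009.11496 — 3 statements merged into one kernel-verified Lean document; each statement's English description precedes it below -/
import Mathlib

section
/- Let A be an integral domain that is seminormal (i.e., whenever b, c ∈ A satisfy b³ = c², there exists a ∈ A with b = a² and c = a³), and let G be a finite group acting on A by ring automorphisms. Then the ring of invariants A^G is also seminormal. -/
/-- If `A` is a seminormal integral domain and a finite group `G` acts on `A` by ring
automorphisms, then the subring of invariants `A^G` is seminormal: whenever `b, c` are
`G`-invariant elements with `b ^ 3 = c ^ 2`, there is a `G`-invariant `a` with
`b = a ^ 2` and `c = a ^ 3`. -/
theorem seminormal_fixedPoints {A : Type*} [CommRing A] [IsDomain A]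
    (G : Type*) [Group G] [Finite G] [MulSemiringAction G A]
    (hsn : ∀ b c : A, b ^ 3 = c ^ 2 → ∃ a : A, b = a ^ 2 ∧ c = a ^ 3) :
    ∀ b c : A, (∀ g : G, g • b = b) → (∀ g : G, g • c = c) → b ^ 3 = c ^ 2 →
      ∃ a : A, (∀ g : G, g • a = a) ∧ b = a ^ 2 ∧ c = a ^ 3 := by
  intro b c hb hc h
  obtain ⟨a, ha2, ha3⟩ := hsn b c h
  refine ⟨a, fun g => ?_, ha2, ha3⟩
  by_cases ha : a = 0
  · subst ha; simp
  · have h2 : (g • a) ^ 2 = a ^ 2 := by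
      have := hb g
      rw [ha2, smul_pow'] at this
      exact this
    have h3 : (g • a) ^ 3 = a ^ 3 := by
      have := hc g
      rw [ha3, smul_pow'] at this
      exact this
    have key : (g • a) * a ^ 2 = a * a ^ 2 := by
      calc (g • a) * a ^ 2 = (g • a) * (g • a) ^ 2 := by rw [h2]
        _ = (g • a) ^ 3 := by ring
        _ = a ^ 3 := h3
        _ = a * a ^ 2 := by ring
    exact mul_right_cancel₀ (pow_ne_zero 2 ha) key
end

section
/- Let A be a seminormal commutative ring. Then the polynomial ring A[t] is seminormal. -/
/-!
A seminormal ring `A` is reduced, so it embeds into the product `D` of its residue fields, with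
seminormal image because square and cube determine an element of a reduced ring. Each `K[X]` (`K`
a field) is integrally closed, hence seminormal, and the componentwise roots have bounded degree,
so `D[X]` is seminormal. It remains to see that `A[X]` is seminormal in `D[X]`. Let `f ∈ D[X]` of
degree `d` with `f², f³ ∈ A[X]`; its leading coefficient `c` lies in `A` since `c²` and `c³` do.
Pseudo-division of `f³ = f² * f` by `f²` gives `c^M f ∈ A[X]`. If `c^(j+1) f ∈ A[X]`, then
`c^j f - c^(j+1) X^d` has degree `< d` and square and cube in `A[X]`, so by induction on `d` it
lies in `A[X]`, and hence so does `c^j f`; descending to `j = 0` gives `f ∈ A[X]`.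
-/

open Polynomial

def IsSeminormalRing (A : Type*) [CommRing A] : Prop :=
  ∀ b c : A, b ^ 3 = c ^ 2 → ∃ a : A, b = a ^ 2 ∧ c = a ^ 3

-- The relative notion: `T` is seminormal in `B`.
def Subring.IsSeminormal {B : Type*} [CommRing B] (T : Subring B) : Prop :=
  ∀ x : B, x ^ 2 ∈ T → x ^ 3 ∈ T → x ∈ T

theorem eq_of_sq_eq_of_cube_eq {R : Type*} [CommRing R] [IsReduced R] {x y : R}
    (h2 : x ^ 2 = y ^ 2) (h3 : x ^ 3 = y ^ 3) : x = y := by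
  have : (x - y) ^ 3 = 0 := by linear_combination 4 * h3 - 3 * (x + y) * h2
  exact sub_eq_zero.mp (IsReduced.eq_zero _ ⟨3, this⟩)

theorem IsSeminormalRing.isReduced {A : Type*} [CommRing A] (hA : IsSeminormalRing A) :
    IsReduced A := by
  refine (isReduced_iff_pow_one_lt 2 one_lt_two).mpr fun x hx => ?_
  obtain ⟨a, ha2, rfl⟩ := hA 0 x (by rw [hx]; ring)
  rw [pow_succ, ← ha2, zero_mul]

theorem IsSeminormalRing.isSeminormal_range {A B : Type*} [CommRing A] [CommRing B] [IsReduced B]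
    (hA : IsSeminormalRing A) {φ : A →+* B} (hφ : Function.Injective φ) :
    φ.range.IsSeminormal := by
  rintro x ⟨b, hb⟩ ⟨c, hc⟩
  obtain ⟨a, rfl, rfl⟩ := hA b c (hφ (by rw [map_pow, map_pow, hb, hc, ← pow_mul, ← pow_mul]))
  exact ⟨a, eq_of_sq_eq_of_cube_eq (by rw [← map_pow, hb]) (by rw [← map_pow, hc])⟩

theorem IsSeminormalRing.of_injective {A B : Type*} [CommRing A] [CommRing B]
    (hB : IsSeminormalRing B) {φ : A →+* B} (hφ : Function.Injective φ)
    (hrange : φ.range.IsSeminormal) : IsSeminormalRing A := by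
  intro b c hbc
  obtain ⟨x, hxb, hxc⟩ := hB (φ b) (φ c) (by rw [← map_pow, ← map_pow, hbc])
  obtain ⟨a, rfl⟩ := hrange x ⟨b, hxb⟩ ⟨c, hxc⟩
  exact ⟨a, hφ (by rw [hxb, map_pow]), hφ (by rw [hxc, map_pow])⟩

theorem IsSeminormalRing.of_isIntegrallyClosed (R : Type*) [CommRing R] [IsDomain R]
    [IsIntegrallyClosed R] : IsSeminormalRing R := by
  intro b c hbc
  by_cases hb : b = 0
  · have hc : c = 0 := (pow_eq_zero_iff two_ne_zero).mp (by rw [← hbc, hb]; ring)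
    exact ⟨0, by simp [hb], by simp [hc]⟩
  obtain ⟨a, rfl⟩ : b ∣ c :=
    (IsIntegrallyClosed.pow_dvd_pow_iff two_ne_zero).mp ⟨b, by rw [← hbc]; ring⟩
  have : b = a ^ 2 := mul_left_cancel₀ (pow_ne_zero 2 hb) (by linear_combination hbc)
  exact ⟨a, this, by rw [this]; ring⟩

theorem injective_pi_algebraMap_residueField (A : Type*) [CommRing A] [IsReduced A] :
    Function.Injective
      (RingHom.pi fun p : PrimeSpectrum A => algebraMap A p.asIdeal.ResidueField) := by
  rw [RingHom.injective_iff_ker_eq_bot, Pi.ker_ringHom]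
  simp only [Ideal.ker_algebraMap_residueField]
  rw [← PrimeSpectrum.nilradical_eq_iInf]
  exact nilradical_eq_zero A

namespace Polynomial

variable {ι : Type*} {R : ι → Type*} [∀ i, CommRing (R i)]

theorem eq_of_forall_map_evalRingHom_eq {P Q : (Π i, R i)[X]}
    (h : ∀ i, P.map (Pi.evalRingHom R i) = Q.map (Pi.evalRingHom R i)) : P = Q := by
  ext n i
  simpa using congr_arg (coeff · n) (h i)

theorem exists_map_evalRingHom_eq (θ : ∀ i, (R i)[X]) {n : ℕ} (hθ : ∀ i, (θ i).natDegree ≤ n) :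
    ∃ Θ : (Π i, R i)[X], ∀ i, Θ.map (Pi.evalRingHom R i) = θ i := by
  refine ⟨∑ k ∈ Finset.range (n + 1), monomial k fun i => (θ i).coeff k, fun i => ?_⟩
  simp only [Polynomial.map_sum, map_monomial, Pi.evalRingHom_apply]
  exact (as_sum_range' _ _ (Nat.lt_succ_of_le (hθ i))).symm

end Polynomial

theorem isSeminormalRing_polynomial_pi {ι : Type*} (K : ι → Type*) [∀ i, Field (K i)] :
    IsSeminormalRing (Π i, K i)[X] := by
  intro f g hfg
  have hroot (i : ι) : ∃ θ : (K i)[X], f.map (Pi.evalRingHom K i) = θ ^ 2 ∧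
      g.map (Pi.evalRingHom K i) = θ ^ 3 :=
    IsSeminormalRing.of_isIntegrallyClosed _ _ _
      (by rw [← Polynomial.map_pow, ← Polynomial.map_pow, hfg])
  choose θ hθ2 hθ3 using hroot
  have hdeg (i : ι) : (θ i).natDegree ≤ f.natDegree := by
    have h := natDegree_map_le (f := Pi.evalRingHom K i) (p := f)
    rw [hθ2 i, natDegree_pow] at h
    omega
  obtain ⟨Θ, hΘ⟩ := exists_map_evalRingHom_eq θ hdeg
  exact ⟨Θ, eq_of_forall_map_evalRingHom_eq fun i => by rw [hθ2, Polynomial.map_pow, hΘ],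
    eq_of_forall_map_evalRingHom_eq fun i => by rw [hθ3, Polynomial.map_pow, hΘ]⟩

theorem Subring.sq_mem_and_cube_mem_sub {R : Type*} [CommRing R] (S : Subring R) {x y : R}
    (hx2 : x ^ 2 ∈ S) (hx3 : x ^ 3 ∈ S) (hy : y ∈ S) (hxy : x * y ∈ S) :
    (x - y) ^ 2 ∈ S ∧ (x - y) ^ 3 ∈ S := by
  have e2 : (x - y) ^ 2 = x ^ 2 - 2 * (x * y) + y ^ 2 := by ring
  have e3 : (x - y) ^ 3 = x ^ 3 - 3 * (x ^ 2 * y) + 3 * ((x * y) * y) - y ^ 3 := by ring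
  rw [e2, e3]
  exact ⟨by aesop, by aesop⟩

namespace Polynomial

variable {A B : Type*} [CommRing A] [CommRing B] {φ : A →+* B}

theorem mem_range_mapRingHom_iff {f : B[X]} :
    f ∈ (mapRingHom φ).range ↔ ∀ n, f.coeff n ∈ φ.range :=
  lifts_iff_coeff_lifts f

theorem C_mem_range_mapRingHom {b : B} (hb : b ∈ φ.range) : C b ∈ (mapRingHom φ).range := by
  obtain ⟨a, rfl⟩ := hb
  exact ⟨C a, map_C φ⟩

theorem C_mul_X_pow_mem_range_mapRingHom {b : B} (hb : b ∈ φ.range) (n : ℕ) :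
    C b * X ^ n ∈ (mapRingHom φ).range := by
  obtain ⟨a, rfl⟩ := hb
  exact ⟨C a * X ^ n, by simp⟩

theorem exists_C_pow_mul_mem_range_mapRingHom {P : B[X]} {m : ℕ}
    (hP : P ∈ (mapRingHom φ).range) (hm : P.natDegree ≤ m) {e : B[X]}
    (hPe : P * e ∈ (mapRingHom φ).range) :
    ∃ M, C (P.coeff m) ^ M * e ∈ (mapRingHom φ).range := by
  set S := (mapRingHom φ).range
  set u := P.coeff m
  induction hd : e.natDegree using Nat.strong_induction_on generalizing e with
  | _ d IH =>
  have hu : C u ∈ S := C_mem_range_mapRingHom (mem_range_mapRingHom_iff.mp hP m)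
  have hlead : C (u * e.leadingCoeff) * X ^ d ∈ S := by
    refine C_mul_X_pow_mem_range_mapRingHom ?_ d
    rw [leadingCoeff, ← coeff_mul_add_eq_of_natDegree_le hm le_rfl]
    exact mem_range_mapRingHom_iff.mp hPe _
  obtain ⟨M, hM⟩ : ∃ M, C u ^ M * (C u * e.eraseLead) ∈ S := by
    rcases e.eraseLead_natDegree_lt_or_eraseLead_eq_zero with hlt | h0
    · refine IH _ (hd ▸ (natDegree_C_mul_le _ _).trans_lt hlt) ?_ rfl
      have : P * (C u * e.eraseLead) = C u * (P * e) - P * (C (u * e.leadingCoeff) * X ^ d) := by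
        rw [← hd, ← self_sub_C_mul_X_pow, C_mul]; ring
      rw [this]
      exact S.sub_mem (S.mul_mem hu hPe) (S.mul_mem hP hlead)
    · exact ⟨0, by simp [h0]⟩
  refine ⟨M + 1, ?_⟩
  have : C u ^ (M + 1) * e =
      C u ^ M * (C u * e.eraseLead) + C u ^ M * (C (u * e.leadingCoeff) * X ^ d) := by
    conv_lhs => rw [← eraseLead_add_C_mul_X_pow e]
    rw [hd, C_mul]; ring
  rw [this]
  exact S.add_mem hM (S.mul_mem (S.pow_mem hu _) hlead)

theorem C_leadingCoeff_pow_mul_mem_range_mapRingHom {f : B[X]} {j : ℕ}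
    (hc : f.leadingCoeff ∈ φ.range)
    (hf2 : f ^ 2 ∈ (mapRingHom φ).range) (hf3 : f ^ 3 ∈ (mapRingHom φ).range)
    (hlower : ∀ g : B[X], g.natDegree < f.natDegree →
      g ^ 2 ∈ (mapRingHom φ).range → g ^ 3 ∈ (mapRingHom φ).range → g ∈ (mapRingHom φ).range)
    (hj : C f.leadingCoeff ^ (j + 1) * f ∈ (mapRingHom φ).range) :
    C f.leadingCoeff ^ j * f ∈ (mapRingHom φ).range := by
  set S := (mapRingHom φ).range
  set c := f.leadingCoeff
  have hcj : C c ^ j ∈ S := S.pow_mem (C_mem_range_mapRingHom hc) j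
  have hlead : C c ^ j * (C c * X ^ f.natDegree) ∈ S :=
    S.mul_mem hcj (C_mul_X_pow_mem_range_mapRingHom hc _)
  have hsplit : C c ^ j * f = C c ^ j * f.eraseLead + C c ^ j * (C c * X ^ f.natDegree) := by
    rw [← mul_add, eraseLead_add_C_mul_X_pow]
  have hpow : (C c ^ j * f.eraseLead) ^ 2 ∈ S ∧ (C c ^ j * f.eraseLead) ^ 3 ∈ S := by
    rw [eq_sub_of_add_eq hsplit.symm]
    refine S.sq_mem_and_cube_mem_sub ?_ ?_ hlead ?_
    · rw [mul_pow, ← pow_mul]; exact S.mul_mem (S.pow_mem (C_mem_range_mapRingHom hc) _) hf2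
    · rw [mul_pow, ← pow_mul]; exact S.mul_mem (S.pow_mem (C_mem_range_mapRingHom hc) _) hf3
    · have : C c ^ j * f * (C c ^ j * (C c * X ^ f.natDegree)) =
          C (c ^ j) * X ^ f.natDegree * (C c ^ (j + 1) * f) := by rw [C_pow]; ring
      rw [this]
      exact S.mul_mem (C_mul_X_pow_mem_range_mapRingHom (pow_mem hc j) _) hj
  have hlow : C c ^ j * f.eraseLead ∈ S := by
    rcases f.eraseLead_natDegree_lt_or_eraseLead_eq_zero with hlt | h0
    · refine hlower _ ?_ hpow.1 hpow.2
      rw [← C_pow]; exact (natDegree_C_mul_le _ _).trans_lt hlt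
    · rw [h0, mul_zero]; exact S.zero_mem
  rw [hsplit]
  exact S.add_mem hlow hlead

end Polynomial

theorem Subring.IsSeminormal.range_mapRingHom {A B : Type*} [CommRing A] [CommRing B]
    {φ : A →+* B} (hφ : φ.range.IsSeminormal) : (mapRingHom φ).range.IsSeminormal := by
  set S := (mapRingHom φ).range
  intro f hf2 hf3
  induction hd : f.natDegree using Nat.strong_induction_on generalizing f with
  | _ d IH =>
  have hcoeff {k : ℕ} (hfk : f ^ k ∈ S) : f.leadingCoeff ^ k ∈ φ.range := by
    have := mem_range_mapRingHom_iff.mp hfk (k * f.natDegree)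
    rwa [coeff_pow_of_natDegree_le le_rfl] at this
  have hc : f.leadingCoeff ∈ φ.range := hφ _ (hcoeff hf2) (hcoeff hf3)
  obtain ⟨M, hM⟩ := exists_C_pow_mul_mem_range_mapRingHom hf2
    (natDegree_pow_le_of_le 2 (le_refl f.natDegree)) (e := f) (by rw [← pow_succ]; exact hf3)
  rw [coeff_pow_of_natDegree_le le_rfl, C_pow, ← pow_mul] at hM
  have descend (k : ℕ) (hk : C f.leadingCoeff ^ k * f ∈ S) : f ∈ S := by
    induction k with
    | zero => simpa using hk
    | succ k ih => exact ih (C_leadingCoeff_pow_mul_mem_range_mapRingHom hc hf2 hf3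
        (fun g hg h2 h3 => IH _ (hd ▸ hg) g h2 h3 rfl) hk)
  exact descend _ hM

/-- If `A` is a seminormal commutative ring, then the polynomial ring `A[t]` is seminormal. -/
theorem seminormal_polynomial {A : Type*} [CommRing A]
    (hsn : ∀ b c : A, b ^ 3 = c ^ 2 → ∃ a : A, b = a ^ 2 ∧ c = a ^ 3) :
    ∀ b c : Polynomial A, b ^ 3 = c ^ 2 → ∃ a : Polynomial A, b = a ^ 2 ∧ c = a ^ 3 := by
  have hA : IsSeminormalRing A := hsn
  have : IsReduced A := hA.isReduced
  have hφ := injective_pi_algebraMap_residueField A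
  exact (isSeminormalRing_polynomial_pi _).of_injective (map_injective _ hφ)
    (hA.isSeminormal_range hφ).range_mapRingHom
end

section
/- Let A be a commutative ring and let u ∈ A[t,t⁻¹] be a unit of the Laurent polynomial ring, where A is a connected reduced ring. Then u = a·tⁿ for some unit a ∈ A^× and some integer n. -/
/-!
Let `v = u⁻¹`. Over a domain, the coefficients of `u v = 1` at the sum of the top degrees and at
the sum of the bottom degrees are nonzero products (`ℤ` has `TwoUniqueSums`), so both sums are `0`
and `u`, `v` are monomials; in particular `uᵢ vⱼ = 0` whenever `i + j ≠ 0`. Applied modulo every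
prime, this makes `uᵢ vⱼ` nilpotent, hence zero since `A` is reduced. The elements `eᵢ = uᵢ v₋ᵢ`
are then orthogonal and sum to the constant coefficient `1` of `u v`, so they are idempotents;
`A` being connected, some `eₙ = 1`, which makes `uₙ` a unit and kills every other coefficient.
-/

open Finset Finsupp LaurentPolynomial

theorem exists_eq_one_of_sum_eq_one_of_mul_eq_zero {R ι : Type*} [Semiring R] [Nontrivial R]
    (hconn : ∀ e : R, IsIdempotentElem e → e = 0 ∨ e = 1) {s : Finset ι} {e : ι → R}
    (hsum : ∑ i ∈ s, e i = 1) (horth : ∀ i ∈ s, ∀ j ∈ s, i ≠ j → e i * e j = 0) :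
    ∃ i ∈ s, e i = 1 := by
  have hidem : ∀ i ∈ s, IsIdempotentElem (e i) := fun i hi => by
    calc e i * e i = ∑ j ∈ s, e i * e j :=
          (Finset.sum_eq_single_of_mem i hi fun j hj hji => horth i hi j hj hji.symm).symm
      _ = e i := by rw [← Finset.mul_sum, hsum, mul_one]
  by_contra! hne
  have hzero : ∑ i ∈ s, e i = 0 :=
    Finset.sum_eq_zero fun i hi => (hconn _ (hidem i hi)).resolve_right (hne i hi)
  exact one_ne_zero (hsum.symm.trans hzero)

namespace AddMonoidAlgebra

variable {R G : Type*}

section NoZeroDivisors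

variable [Semiring R] [NoZeroDivisors R] [AddZeroClass G]

theorem add_eq_zero_of_uniqueAdd_of_mul_eq_one {f g : R[G]} (hfg : f * g = 1) {a b : G}
    (ha : a ∈ f.coeff.support) (hb : b ∈ g.coeff.support)
    (huniq : UniqueAdd f.coeff.support g.coeff.support a b) : a + b = 0 := by
  have hmem : a + b ∈ (f * g).coeff.support := by
    rw [mem_support_iff, coeff_mul_add_of_uniqueAdd huniq]
    exact mul_ne_zero (mem_support_iff.1 ha) (mem_support_iff.1 hb)
  rw [hfg] at hmem
  simpa using support_coeff_one_subset hmem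

theorem coeff_mul_coeff_eq_zero_of_mul_eq_one [TwoUniqueSums G] {f g : R[G]} (hfg : f * g = 1)
    {a b : G} (hab : a + b ≠ 0) : f.coeff a * g.coeff b = 0 := by
  by_contra hne
  have ha : a ∈ f.coeff.support := mem_support_iff.2 (left_ne_zero_of_mul hne)
  have hb : b ∈ g.coeff.support := mem_support_iff.2 (right_ne_zero_of_mul hne)
  by_cases hcard : 1 < #f.coeff.support * #g.coeff.support
  · obtain ⟨p, hp, q, hq, hpq, hup, huq⟩ := TwoUniqueSums.uniqueAdd_of_one_lt_card hcard
    rw [mem_product] at hp hq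
    have hp0 := add_eq_zero_of_uniqueAdd_of_mul_eq_one hfg hp.1 hp.2 hup
    have hq0 := add_eq_zero_of_uniqueAdd_of_mul_eq_one hfg hq.1 hq.2 huq
    exact hpq (Prod.ext_iff.2 (hup hq.1 hq.2 (hq0.trans hp0.symm))).symm
  · have hfpos := card_pos.2 ⟨a, ha⟩
    have hgpos := card_pos.2 ⟨b, hb⟩
    have hf1 : #f.coeff.support ≤ 1 := by nlinarith
    have hg1 : #g.coeff.support ≤ 1 := by nlinarith
    exact hab <| add_eq_zero_of_uniqueAdd_of_mul_eq_one hfg ha hb fun x y hx hy _ =>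
      ⟨card_le_one.1 hf1 x hx a ha, card_le_one.1 hg1 y hy b hb⟩

end NoZeroDivisors

theorem coeff_mul_coeff_eq_zero_of_mul_eq_one_of_isReduced [CommRing R] [IsReduced R]
    [AddMonoid G] [TwoUniqueSums G] {f g : R[G]} (hfg : f * g = 1) {a b : G} (hab : a + b ≠ 0) :
    f.coeff a * g.coeff b = 0 := by
  refine (nilpotent_iff_mem_prime.2 fun P hP => ?_).eq_zero
  rw [← Ideal.Quotient.eq_zero_iff_mem, map_mul, ← coeff_mapRingHom, ← coeff_mapRingHom]
  refine coeff_mul_coeff_eq_zero_of_mul_eq_one ?_ hab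
  rw [← map_mul, hfg, map_one]

theorem sum_coeff_mul_coeff_neg_eq_one [Semiring R] [AddGroup G] {f g : R[G]} (hfg : f * g = 1) :
    ∑ a ∈ f.coeff.support, f.coeff a * g.coeff (-a) = 1 := by
  simpa [hfg, Finsupp.sum] using (coeff_mul_apply_left f g 0).symm

section Orthogonal

variable [CommRing R] [AddGroup G] {f g : R[G]}
  (horth : ∀ a b : G, a + b ≠ 0 → f.coeff a * g.coeff b = 0)
include horth

theorem coeff_mul_coeff_neg_mul_eq_zero {a b : G} (hab : a ≠ b) :
    f.coeff a * g.coeff (-a) * (f.coeff b * g.coeff (-b)) = 0 := by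
  have hba : f.coeff b * g.coeff (-a) = 0 := horth b (-a) fun h => hab (add_neg_eq_zero.1 h).symm
  linear_combination f.coeff a * g.coeff (-b) * hba

theorem eq_single_of_coeff_mul_coeff_neg_eq_one {a : G} (ha : f.coeff a * g.coeff (-a) = 1) :
    f = single a (f.coeff a) := by
  ext b
  rcases eq_or_ne b a with rfl | hba
  · simp
  · rw [coeff_single, single_eq_of_ne' (Ne.symm hba)]
    have hb : f.coeff b * g.coeff (-a) = 0 :=
      horth b (-a) fun h => hba (add_neg_eq_zero.1 h)
    linear_combination -f.coeff b * ha + f.coeff a * hb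

end Orthogonal

end AddMonoidAlgebra

open AddMonoidAlgebra

/-- If `A` is a connected reduced commutative ring (its only idempotents are `0` and `1`),
then every unit of the Laurent polynomial ring `A[t, t⁻¹]` has the form `a • tⁿ` for a
unit `a` of `A` and an integer `n`. -/
theorem laurent_unit_eq_unit_mul_T {A : Type*} [CommRing A] [IsReduced A]
    (hconn : ∀ e : A, IsIdempotentElem e → e = 0 ∨ e = 1)
    (u : (LaurentPolynomial A)ˣ) :
    ∃ (a : Aˣ) (n : ℤ),
      (u : LaurentPolynomial A) = LaurentPolynomial.C (a : A) * LaurentPolynomial.T n := by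
  rcases subsingleton_or_nontrivial A with _ | _
  · exact ⟨1, 0, Subsingleton.elim _ _⟩
  have horth : ∀ i j : ℤ, i + j ≠ 0 →
      (u : LaurentPolynomial A).coeff i * (↑u⁻¹ : LaurentPolynomial A).coeff j = 0 :=
    fun _ _ => coeff_mul_coeff_eq_zero_of_mul_eq_one_of_isReduced u.mul_inv
  obtain ⟨n, -, hn⟩ := exists_eq_one_of_sum_eq_one_of_mul_eq_zero hconn
    (sum_coeff_mul_coeff_neg_eq_one u.mul_inv)
    fun i _ j _ hij => coeff_mul_coeff_neg_mul_eq_zero horth hij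
  refine ⟨Units.mkOfMulEqOne _ _ hn, n, ?_⟩
  rw [← single_eq_C_mul_T]
  exact eq_single_of_coeff_mul_coeff_neg_eq_one horth hn
end
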